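/- Let k ∈ ℕ and w ∈ Σ*, and suppose there is u ∈ A* with |u| = k such that u is a prefix of π(w) and a suffix of π̄(w). Then w is k-shuffled if and only if ow(w) ≥ k, where w is k-shuffled means: w contains at least k write symbols and at least k read symbols, and for each i = 1,…,k, the i-th write symbol of w occurs before the i-th of the last k read symbols of w. -/

import Mathlib

/-- A basic queue action: write a letter or read a letter. -/
inductive Act (A : Type) : Type
  | wr (a : A)
  | rd (a : A)
deriving DecidableEq

variable {A : Type} [DecidableEq A]

/-- The action of words over `Act A` on queue states `A* ∪ {⊥}` (⊥ = `none`). -/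
def act : Option (List A) → List (Act A) → Option (List A)
  | q, [] => q
  | none, _ :: _ => none
  | some q, (Act.wr a) :: u => act (some (q ++ [a])) u
  | some q, (Act.rd a) :: u =>
    match q with
    | [] => none
    | b :: q' => if b = a then act (some q') u else none

/-- Two words over `Act A` are equivalent if they act identically on all queues. -/
def qequiv (u v : List (Act A)) : Prop := ∀ q : List A, act (some q) u = act (some q) v

/-- Writing the word `w`. -/
def W (w : List A) : List (Act A) := w.map Act.wr

/-- Reading the word `w` (the barred copy of `w`). -/
def R (w : List A) : List (Act A) := w.map Act.rd

/-- `shuffle s` is the word `s₁ s̄₁ s₂ s̄₂ … sₖ s̄ₖ`. -/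
def shuffle (s : List A) : List (Act A) := s.flatMap fun a => [Act.wr a, Act.rd a]

/-- The projection to write letters. -/
def prW (w : List (Act A)) : List A :=
  w.filterMap fun x => match x with | Act.wr a => some a | Act.rd _ => none

/-- The projection to read letters (with the bars removed). -/
def prR (w : List (Act A)) : List A :=
  w.filterMap fun x => match x with | Act.wr _ => none | Act.rd a => some a

theorem act_append (u v : List (Act A)) : ∀ q, act q (u ++ v) = act (act q u) v := by
  induction u with
  | nil =>
      intro q
      cases q <;> rfl
  | cons x u ih =>
      intro q
      cases q with
      | none =>
          simp only [List.cons_append, act]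
          cases v with
          | nil => rfl
          | cons _ _ => rfl
      | some q =>
          cases x with
          | wr a => simpa [act] using ih _
          | rd a =>
              cases q with
              | nil =>
                  simp only [List.cons_append, act]
                  cases v with
                  | nil => rfl
                  | cons _ _ => rfl
              | cons b q' =>
                  by_cases h : b = a
                  · simp [List.cons_append, act, h, ih]
                  · simp only [List.cons_append, act, if_neg h]
                    cases v with
                    | nil => rfl
                    | cons _ _ => rfl

/-- The setoid of queue-action equivalence. -/
def qsetoid (A : Type) [DecidableEq A] : Setoid (List (Act A)) :=
  ⟨qequiv, ⟨fun _ _ => rfl, fun h q => (h q).symm, fun h1 h2 q => (h1 q).trans (h2 q)⟩⟩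

/-- The monoid of queue actions. -/
def QAct (A : Type) [DecidableEq A] : Type := Quotient (qsetoid A)

theorem act_none : ∀ v : List (Act A), act (none : Option (List A)) v = none
  | [] => rfl
  | _ :: _ => rfl

theorem qequiv_append {u u' v v' : List (Act A)} (hu : qequiv u u') (hv : qequiv v v') :
    qequiv (u ++ v) (u' ++ v') := by
  intro q
  rw [act_append, act_append, hu q]
  cases h : act (some q) u' with
  | none => rw [act_none, act_none]
  | some q' => exact hv q'

instance : Monoid (QAct A) where
  mul := Quotient.map₂ (· ++ ·) (fun _ _ hu _ _ hv => qequiv_append hu hv)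
  one := Quotient.mk (qsetoid A) []
  mul_assoc := by
    rintro ⟨u⟩ ⟨v⟩ ⟨w⟩
    exact congrArg (Quotient.mk (qsetoid A)) (List.append_assoc u v w)
  one_mul := by
    rintro ⟨u⟩
    rfl
  mul_one := by
    rintro ⟨u⟩
    exact congrArg (Quotient.mk (qsetoid A)) (List.append_nil u)

/-- The class of a word in the monoid of queue actions. -/
def cls (w : List (Act A)) : QAct A := Quotient.mk (qsetoid A) w

theorem cls_mul (u v : List (Act A)) : cls u * cls v = cls (u ++ v) := rfl

/-- `w` is `k`-shuffled: it has at least `k` write and `k` read symbols and, for each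
`i < k`, the `i`-th write symbol occurs before the `i`-th of the last `k` read symbols. -/
def kShuffled (k : ℕ) (w : List (Act A)) : Prop :=
  ∀ i < k, ∃ (x y z : List (Act A)) (a b : A),
    w = x ++ [Act.wr a] ++ y ++ [Act.rd b] ++ z ∧
    (prW x).length = i ∧ (prR z).length = k - 1 - i

/-!
Let `m = |π̄(w)|` and `π̄(w) = q u`, so `|q| = m - k`. Being `k`-shuffled says that no prefix of
`w` has read more than `m - k` letters beyond those it has written. As `u` is also a prefix of
`π(w)`, this amounts to: each prefix `p` of `w` reads a prefix of `q π(p)`, i.e. `w` does not fail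
when run on the queue `q`. That depends only on the class of `w` in the queue monoid, and so do
`π` and `π̄` (this uses `|A| ≥ 2`), so `w` may be replaced by its normal form
`x̄ · shuffle(y, ȳ) · z`. The prefix `x̄` reads `|x|` letters and writes none, which forces
`|x| ≤ m - k`, i.e. `k ≤ |y|`; conversely the normal form runs on the queue `x`, so none of its
prefixes reads more than `|x|` letters beyond those it has written.
-/

theorem List.exists_eq_append_cons_of_lt_length_filterMap {α β : Type*} (f : α → Option β) :
    ∀ {l : List α} {j : ℕ}, j < (l.filterMap f).length →
      ∃ p a s b, l = p ++ a :: s ∧ f a = some b ∧ (p.filterMap f).length = j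
  | [], _, hj => by simp at hj
  | x :: l, j, hj => by
    cases hfx : f x with
    | none =>
      obtain ⟨p, a, s, b, rfl, hab, hp⟩ :=
        exists_eq_append_cons_of_lt_length_filterMap f (by simpa [hfx] using hj)
      exact ⟨x :: p, a, s, b, rfl, hab, by simpa [hfx] using hp⟩
    | some c =>
      cases j with
      | zero => exact ⟨[], x, l, c, rfl, hfx, rfl⟩
      | succ j =>
        obtain ⟨p, a, s, b, rfl, hab, hp⟩ :=
          exists_eq_append_cons_of_lt_length_filterMap f (by simpa [hfx] using hj)
        exact ⟨x :: p, a, s, b, rfl, hab, by simpa [hfx] using hp⟩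

theorem List.forall_prefix_cons_iff {α : Type*} {a : α} {l : List α} {P : List α → Prop} :
    (∀ p, p <+: a :: l → P p) ↔ P [] ∧ ∀ t, t <+: l → P (a :: t) := by
  simp only [List.prefix_cons_iff, or_imp, forall_and, forall_eq, exists_imp, and_imp]
  exact and_congr_right fun _ => ⟨fun h t ht => h _ t rfl ht, fun h _ t hp ht => hp ▸ h t ht⟩

theorem List.eq_and_eq_of_append_cons_eq {α : Type*} {l₁ l₂ r₁ r₂ : List α} {c d : α}
    (hcd : c ≠ d) (hc : l₁ ++ c :: r₁ = l₂ ++ c :: r₂) (hd : l₁ ++ d :: r₁ = l₂ ++ d :: r₂) :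
    l₁ = l₂ ∧ r₁ = r₂ := by
  have key : ∀ {l₁ l₂ r₁ r₂ : List α}, l₁ ++ c :: r₁ = l₂ ++ c :: r₂ →
      l₁ ++ d :: r₁ = l₂ ++ d :: r₂ → l₂.length ≤ l₁.length := by
    intro l₁ l₂ r₁ r₂ hc hd
    by_contra! hlt
    have hc' := congrArg (·[l₁.length]?) hc
    have hd' := congrArg (·[l₁.length]?) hd
    simp only [List.getElem?_append_right le_rfl, List.getElem?_append_left hlt, Nat.sub_self,
      List.getElem?_cons_zero] at hc' hd'
    exact hcd (Option.some_injective _ (hc'.trans hd'.symm))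
  obtain ⟨h₁, h₂⟩ := List.append_inj hc (le_antisymm (key hc.symm hd.symm) (key hc hd))
  exact ⟨h₁, List.tail_eq_of_cons_eq h₂⟩

@[simp] theorem prW_nil {A : Type} : prW ([] : List (Act A)) = [] := rfl

@[simp] theorem prW_cons_wr {A : Type} (a : A) (w : List (Act A)) :
    prW (Act.wr a :: w) = a :: prW w := rfl

@[simp] theorem prW_cons_rd {A : Type} (a : A) (w : List (Act A)) :
    prW (Act.rd a :: w) = prW w := rfl

@[simp] theorem prR_nil {A : Type} : prR ([] : List (Act A)) = [] := rfl

@[simp] theorem prR_cons_wr {A : Type} (a : A) (w : List (Act A)) :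
    prR (Act.wr a :: w) = prR w := rfl

@[simp] theorem prR_cons_rd {A : Type} (a : A) (w : List (Act A)) :
    prR (Act.rd a :: w) = a :: prR w := rfl

@[simp] theorem prW_append {A : Type} (u v : List (Act A)) : prW (u ++ v) = prW u ++ prW v :=
  List.filterMap_append

@[simp] theorem prR_append {A : Type} (u v : List (Act A)) : prR (u ++ v) = prR u ++ prR v :=
  List.filterMap_append

@[simp] theorem prW_R {A : Type} (x : List A) : prW (R x) = [] := by
  induction x <;> simp_all [R]

@[simp] theorem prR_R {A : Type} (x : List A) : prR (R x) = x := by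
  induction x <;> simp_all [R]

@[simp] theorem prW_W {A : Type} (x : List A) : prW (W x) = x := by
  induction x <;> simp_all [W]

@[simp] theorem prR_W {A : Type} (x : List A) : prR (W x) = [] := by
  induction x <;> simp_all [W]

@[simp] theorem shuffle_nil {A : Type} : shuffle ([] : List A) = [] := rfl

@[simp] theorem shuffle_cons {A : Type} (a : A) (y : List A) :
    shuffle (a :: y) = Act.wr a :: Act.rd a :: shuffle y := rfl

@[simp] theorem prR_shuffle {A : Type} (y : List A) : prR (shuffle y) = y := by
  induction y <;> simp_all

theorem List.IsPrefix.prW {A : Type} {p w : List (Act A)} (h : p <+: w) : prW p <+: prW w :=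
  h.filterMap _

theorem List.IsPrefix.prR {A : Type} {p w : List (Act A)} (h : p <+: w) : prR p <+: prR w :=
  h.filterMap _

theorem exists_eq_append_wr_cons {A : Type} {w : List (Act A)} {j : ℕ}
    (hj : j < (prW w).length) :
    ∃ p a s, w = p ++ Act.wr a :: s ∧ (prW p).length = j := by
  obtain ⟨p, _ | a, s, b, rfl, hab, hp⟩ := List.exists_eq_append_cons_of_lt_length_filterMap _ hj
  · exact ⟨p, _, s, rfl, hp⟩
  · cases hab

theorem exists_eq_append_rd_cons {A : Type} {w : List (Act A)} {j : ℕ}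
    (hj : j < (prR w).length) :
    ∃ p b s, w = p ++ Act.rd b :: s ∧ (prR p).length = j := by
  obtain ⟨p, _ | a, s, b, rfl, hab, hp⟩ := List.exists_eq_append_cons_of_lt_length_filterMap _ hj
  · cases hab
  · exact ⟨p, _, s, rfl, hp⟩

theorem kShuffled_iff_forall_prefix {A : Type} {k : ℕ} {w : List (Act A)}
    (hk : k ≤ (prR w).length) :
    kShuffled k w ↔ ∀ p, p <+: w → (prR p).length ≤ (prR w).length - k + (prW p).length := by
  constructor
  · intro hw p hp
    by_contra! hlt
    have hpw := hp.prR.length_le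
    obtain ⟨X, Y, Z, a, b, rfl, hX, hZ⟩ := hw (prW p).length (by omega)
    rcases List.prefix_or_prefix_of_prefix hp (by simp : X ++ [Act.wr a] <+: _) with hpX | hXp
    · have := hpX.prR.length_le
      simp only [prR_append, List.length_append, prR_cons_rd, prR_cons_wr, prR_nil,
        List.append_nil, List.length_cons, List.length_nil] at this hlt hk
      omega
    · have := hXp.prW.length_le
      simp only [prW_append, List.length_append, prW_cons_wr, prW_nil, List.length_singleton]
        at this
      omega
  · intro h i hi
    obtain ⟨P, b, Z, hw, hP⟩ :=
      exists_eq_append_rd_cons (w := w) (j := (prR w).length - k + i) (by omega)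
    have hm : (prR w).length = (prR P).length + 1 + (prR Z).length := by
      simp only [hw, prR_append, prR_cons_rd, List.length_append, List.length_cons]
      omega
    have hPb : (prR P).length + 1 ≤ (prR w).length - k + (prW P).length := by
      simpa using h (P ++ [Act.rd b]) (by simp [hw])
    obtain ⟨X, a, Y, rfl, hX⟩ := exists_eq_append_wr_cons (w := P) (j := i) (by omega)
    exact ⟨X, Y, Z, a, b, by simp [hw], hX, by omega⟩

theorem act_some_eq_some_iff {w : List (Act A)} {q r : List A} :
    act (some q) w = some r ↔
      (∀ p, p <+: w → prR p <+: q ++ prW p) ∧ q ++ prW w = prR w ++ r := by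
  induction w generalizing q with
  | nil => simp [act]
  | cons c w ih =>
    cases c with
    | wr a => simp [act, ih, List.forall_prefix_cons_iff]
    | rd a =>
      rcases q with _ | ⟨b, q⟩
      · simp only [act, reduceCtorEq, false_iff, not_and]
        intro h
        simpa using h [Act.rd a] (by simp)
      · by_cases hb : b = a
        · subst hb
          simp [act, ih, List.forall_prefix_cons_iff]
        · simp [act, hb, List.forall_prefix_cons_iff]

theorem act_ne_none_iff {w : List (Act A)} {q : List A} :
    act (some q) w ≠ none ↔ ∀ p, p <+: w → prR p <+: q ++ prW p := by
  simp only [Option.ne_none_iff_exists', act_some_eq_some_iff]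
  refine ⟨fun ⟨_, h, _⟩ => h, fun h => ?_⟩
  obtain ⟨r, hr⟩ := h w (List.prefix_refl w)
  exact ⟨r, h, hr.symm⟩

theorem act_prR_append (w : List (Act A)) (t : List A) :
    act (some (prR w ++ t)) w = some (t ++ prW w) :=
  act_some_eq_some_iff.2 ⟨fun p hp => hp.prR.trans (by simp), by simp⟩

theorem act_some_nil_shuffle (y : List A) : act (some []) (shuffle y) = some [] := by
  induction y with
  | nil => rfl
  | cons a y ih => simpa [act] using ih

theorem act_R_shuffle_W (x y z : List A) : act (some x) (R x ++ shuffle y ++ W z) = some z := by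
  have hR : act (some x) (R x) = some [] := by simpa using act_prR_append (R x) []
  have hW : act (some []) (W z) = some z := by simpa using act_prR_append (W z) []
  rw [act_append, act_append, hR, act_some_nil_shuffle, hW]

/-- `w'` acts like `w`, turning the queue `prR w ++ t` into `t ++ prW w`; hence
`prR w ++ t ++ prW w' = prR w' ++ t ++ prW w` for every `t`, and two distinct one-letter words `t`
fix where the split lies. -/
theorem prR_eq_and_prW_eq_of_qequiv [Nontrivial A] {w w' : List (Act A)} (h : qequiv w w') :
    prR w = prR w' ∧ prW w = prW w' := by
  obtain ⟨c, d, hcd⟩ := exists_pair_ne A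
  have key : ∀ t, prR w ++ t ++ prW w' = prR w' ++ (t ++ prW w) := fun t =>
    (act_some_eq_some_iff.1 ((h _).symm.trans (act_prR_append w t))).2
  obtain ⟨hR, hW⟩ :=
    List.eq_and_eq_of_append_cons_eq hcd (by simpa using key [c]) (by simpa using key [d])
  exact ⟨hR, hW.symm⟩

theorem forall_prefix_prR_prefix_iff_length_le {A : Type} {w : List (Act A)} {q u : List A}
    (hR : prR w = q ++ u) (hW : u <+: prW w) :
    (∀ p, p <+: w → prR p <+: q ++ prW p) ↔
      ∀ p, p <+: w → (prR p).length ≤ q.length + (prW p).length := by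
  refine forall₂_congr fun p hp => ⟨fun h => by simpa using h.length_le, fun h => ?_⟩
  refine List.prefix_of_prefix_length_le (l₃ := q ++ prW w) ?_ ?_ (by simpa using h)
  · exact (hR ▸ hp.prR).trans (by simpa using hW)
  · simpa using hp.prW

theorem stmt19_general [Nontrivial A] (k : ℕ) (w : List (Act A)) (u : List A)
    (hlen : u.length = k) (hpre : u <+: prW w) (hsuf : u <:+ prR w)
    (x y z : List A) (hnf : qequiv w (R x ++ shuffle y ++ W z)) :
    kShuffled k w ↔ k ≤ y.length := by
  obtain ⟨hR, hW⟩ := prR_eq_and_prW_eq_of_qequiv hnf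
  obtain ⟨q, hq⟩ := hsuf
  have hm : (prR w).length = q.length + k := by rw [← hq, List.length_append, hlen]
  have hxy : (prR w).length = x.length + y.length := by simp [hR]
  rw [kShuffled_iff_forall_prefix (by omega), show (prR w).length - k = q.length by omega,
    ← forall_prefix_prR_prefix_iff_length_le hq.symm hpre, ← act_ne_none_iff, hnf q,
    act_ne_none_iff, forall_prefix_prR_prefix_iff_length_le (hR ▸ hq.symm) (hW ▸ hpre)]
  constructor
  · intro h
    have := h (R x) (by simp)
    simp only [prR_R, prW_R, List.length_nil] at this
    omega
  · intro hky p hp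
    have hx : act (some x) (R x ++ shuffle y ++ W z) ≠ none := by
      rw [act_R_shuffle_W]
      exact Option.some_ne_none z
    have := (act_ne_none_iff.1 hx p hp).length_le
    simp only [List.length_append] at this
    omega

/-- If `u` of length `k` is a prefix of `π(w)` and a suffix of `π̄(w)`, then `w` is
`k`-shuffled iff the overlap width of `w` is at least `k` (where the normal form of `w`
is `x̄ · shuffle(y,ȳ) · z`, so `ow(w) = |y|`). -/
theorem stmt19 [Fintype A] [Nontrivial A] (k : ℕ) (w : List (Act A)) (u : List A)
    (hlen : u.length = k) (hpre : u <+: prW w) (hsuf : u <:+ prR w)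
    (x y z : List A) (hnf : qequiv w (R x ++ shuffle y ++ W z)) :
    kShuffled k w ↔ k ≤ y.length :=
  stmt19_general k w u hlen hpre hsuf x y z hnf
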